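/- arXiv:2504.12119 — 2 statements merged into one kernel-verified Lean document; each statement's English description precedes it below -/
import Mathlib

section
/- Let 1 ≤ p_1,…,p_m < ∞ with 1/p = 1/p_1 + ⋯ + 1/p_m, and suppose the m-tuple of weights w⃗ = (w_1,…,w_m) belongs to A_{p⃗}((ℝⁿ)^m). Then for every 0 ≤ δ ≤ 1 the tuple w⃗^δ := (w_1^δ,…,w_m^δ) also belongs to A_{p⃗}((ℝⁿ)^m). -/
open MeasureTheory ENNReal Filter
open scoped FourierTransform

noncomputable section

namespace RoughMSI

/-- ℝⁿ with the Euclidean norm. -/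
abbrev Rn (n : ℕ) : Type := EuclideanSpace ℝ (Fin n)

/-- (ℝⁿ)^m with the Euclidean norm (identified with ℝ^{mn}). -/
abbrev Emn (m n : ℕ) : Type := EuclideanSpace ℝ (Fin m × Fin n)

/-- The j-th component in ℝⁿ of a point y⃗ ∈ (ℝⁿ)^m. -/
def projE {m n : ℕ} (y : Emn m n) (j : Fin m) : Rn n := WithLp.toLp 2 (fun i => y (j, i))

/-- The diagonal point (x,…,x) ∈ (ℝⁿ)^m. -/
def diagE {m n : ℕ} (x : Rn n) : Emn m n := WithLp.toLp 2 (fun p : Fin m × Fin n => x p.2)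

/-- Closed axis-parallel cube with center `c` and side length `t`. -/
def cubeQ {n : ℕ} (c : Rn n) (t : ℝ) : Set (Rn n) := {y | ∀ i, |y i - c i| ≤ t / 2}

/-- Average `|Q|⁻¹ ∫_Q f` of an `ℝ≥0∞`-valued function. -/
def avgE {n : ℕ} (Q : Set (Rn n)) (f : Rn n → ℝ≥0∞) : ℝ≥0∞ :=
  (volume Q)⁻¹ * ∫⁻ x in Q, f x

/-- The multi-sublinear Hardy–Littlewood maximal function `𝐌(f₁,…,f_m)`. -/
def MM {m n : ℕ} (f : Fin m → Rn n → ℝ) (x : Rn n) : ℝ≥0∞ :=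
  ⨆ (c : Rn n) (t : ℝ) (_ : 0 < t) (_ : x ∈ cubeQ c t),
    ∏ j, avgE (cubeQ c t) (fun u => (‖f j u‖₊ : ℝ≥0∞))

/-- The `L^r` variant `𝐌_r(f₁,…,f_m) = 𝐌(|f₁|^r,…,|f_m|^r)^{1/r}`. -/
def MMr {m n : ℕ} (r : ℝ) (f : Fin m → Rn n → ℝ) (x : Rn n) : ℝ≥0∞ :=
  (MM (fun j u => |f j u| ^ r) x) ^ r⁻¹

/-- The sharp maximal function `𝓜_r^♯ h`. -/
def sharpM {n : ℕ} (r : ℝ) (h : Rn n → ℂ) (x : Rn n) : ℝ≥0∞ :=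
  ⨆ (c : Rn n) (t : ℝ) (_ : 0 < t) (_ : x ∈ cubeQ c t),
    ⨅ a : ℂ, (avgE (cubeQ c t) (fun y => (‖h y - a‖₊ : ℝ≥0∞) ^ r)) ^ r⁻¹

/-- Bounded measurable functions with compact support, `L^∞_c(ℝⁿ)`. -/
def BddCompactSupp {n : ℕ} (f : Rn n → ℝ) : Prop :=
  Measurable f ∧ (∃ C : ℝ, ∀ x, |f x| ≤ C) ∧ HasCompactSupport f

/-- A weight: nonnegative and locally integrable. -/
def IsWeight {n : ℕ} (w : Rn n → ℝ) : Prop :=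
  (∀ x, 0 ≤ w x) ∧ LocallyIntegrable w volume

/-- The weighted Lebesgue (quasi)norm `‖f‖_{L^p(w)}`. -/
def wnorm {n : ℕ} {F : Type*} [NNNorm F] (p : ℝ) (w : Rn n → ℝ) (f : Rn n → F) : ℝ≥0∞ :=
  (∫⁻ x, (‖f x‖₊ : ℝ≥0∞) ^ p * ENNReal.ofReal (w x)) ^ p⁻¹

/-- The harmonic exponent: `1/pharm p⃗ = ∑_j 1/p_j`. -/
def pharm {m : ℕ} (pv : Fin m → ℝ) : ℝ := (∑ j, (pv j)⁻¹)⁻¹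

/-- The weight `v_{w⃗} = ∏_j w_j^{p/p_j}` with `1/p = ∑_j 1/p_j`. -/
def vweight {m n : ℕ} (pv : Fin m → ℝ) (w : Fin m → Rn n → ℝ) (x : Rn n) : ℝ :=
  ∏ j, (w j x) ^ (pharm pv / pv j)

/-- The factor `(|Q|⁻¹∫_Q w_j^{1-p_j'})^{1/p_j'}`, interpreted as `(essinf_Q w_j)⁻¹`
when `p_j = 1`.  Here `1 - p_j' = -1/(p_j-1)` and `1/p_j' = (p_j-1)/p_j`. -/
def apFactor {n : ℕ} (pj : ℝ) (wj : Rn n → ℝ) (Q : Set (Rn n)) : ℝ≥0∞ :=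
  if pj = 1 then (essInf (fun x => ENNReal.ofReal (wj x)) (volume.restrict Q))⁻¹
  else (avgE Q (fun x => ENNReal.ofReal (wj x) ^ (-(pj - 1)⁻¹))) ^ ((pj - 1) / pj)

/-- Membership in the multiple weight class `A_{p⃗}((ℝⁿ)^m)`. -/
def MemApVec {m n : ℕ} (pv : Fin m → ℝ) (w : Fin m → Rn n → ℝ) : Prop :=
  ∃ C : ℝ≥0∞, C ≠ ⊤ ∧ ∀ (c : Rn n) (t : ℝ), 0 < t →
    (avgE (cubeQ c t) (fun x => ENNReal.ofReal (vweight pv w x))) ^ (∑ j, (pv j)⁻¹) *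
      ∏ j, apFactor (pv j) (w j) (cubeQ c t) ≤ C

/-- The Muckenhoupt `A_s` characteristic `[u]_{A_s}` (for `1 < s < ∞`). -/
def apConst {n : ℕ} (s : ℝ) (u : Rn n → ℝ) : ℝ≥0∞ :=
  ⨆ (c : Rn n) (t : ℝ) (_ : 0 < t),
    avgE (cubeQ c t) (fun x => ENNReal.ofReal (u x)) *
      (avgE (cubeQ c t) (fun x => ENNReal.ofReal (u x) ^ (-(s - 1)⁻¹))) ^ (s - 1)

/-- The surface measure on the unit sphere 𝕊^{mn-1} ⊂ (ℝⁿ)^m. -/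
def sphereMeasure (m n : ℕ) : Measure (Metric.sphere (0 : Emn m n) 1) :=
  (volume : Measure (Emn m n)).toSphere

/-- `‖Ω‖_{L^q(𝕊^{mn-1})}`. -/
def sphereLq (m n : ℕ) (q : ℝ≥0∞) (Ω : Emn m n → ℝ) : ℝ≥0∞ :=
  eLpNorm (fun x : Metric.sphere (0 : Emn m n) 1 => Ω x) q (sphereMeasure m n)

/-- Vanishing mean of Ω on the sphere. -/
def MeanZero (m n : ℕ) (Ω : Emn m n → ℝ) : Prop :=
  ∫ x : Metric.sphere (0 : Emn m n) 1, Ω x ∂(sphereMeasure m n) = 0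

/-- The rough kernel `K(y⃗) = Ω(y⃗/|y⃗|)/|y⃗|^{mn}`. -/
def Kker (m n : ℕ) (Ω : Emn m n → ℝ) (y : Emn m n) : ℝ :=
  Ω (‖y‖⁻¹ • y) / ‖y‖ ^ (m * n)

/-- The Fourier transform of a Schwartz function on (ℝⁿ)^m. -/
def PsiHat {m n : ℕ} (Ψ : SchwartzMap (Emn m n) ℂ) : Emn m n → ℂ := 𝓕 ⇑Ψ

/-- The Littlewood–Paley assumptions on Ψ: `Ψ̂` is supported in the annulus
`{1/2 ≤ |ξ| ≤ 2}` and `∑_{k ∈ ℤ} Ψ̂(2^{-k}ξ) = 1` for `ξ ≠ 0`. -/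
def GoodPsi {m n : ℕ} (Ψ : SchwartzMap (Emn m n) ℂ) : Prop :=
  (∀ ξ : Emn m n, PsiHat Ψ ξ ≠ 0 → 1 / 2 ≤ ‖ξ‖ ∧ ‖ξ‖ ≤ 2) ∧
  (∀ ξ : Emn m n, ξ ≠ 0 → ∑' k : ℤ, PsiHat Ψ ((2 : ℝ) ^ (-k) • ξ) = 1)

/-- `Ψ_k := 2^{kmn} Ψ(2^k ·)`. -/
def Psik {m n : ℕ} (Ψ : SchwartzMap (Emn m n) ℂ) (k : ℤ) (y : Emn m n) : ℂ :=
  (2 : ℂ) ^ (k * (m * n : ℤ)) * Ψ ((2 : ℝ) ^ k • y)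

/-- `K^γ(y⃗) := Ψ̂(2^γ y⃗) K(y⃗)`. -/
def Kgamma (m n : ℕ) (Ω : Emn m n → ℝ) (Ψ : SchwartzMap (Emn m n) ℂ) (γ : ℤ)
    (y : Emn m n) : ℂ :=
  PsiHat Ψ ((2 : ℝ) ^ γ • y) * (Kker m n Ω y : ℂ)

/-- `K_μ^γ := Ψ_{μ+γ} ∗ K^γ`. -/
def Kmg (m n : ℕ) (Ω : Emn m n → ℝ) (Ψ : SchwartzMap (Emn m n) ℂ) (μ γ : ℤ)
    (y : Emn m n) : ℂ :=
  ∫ z : Emn m n, Psik Ψ (μ + γ) (y - z) * Kgamma m n Ω Ψ γ z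

/-- `K_μ := ∑_{γ ∈ ℤ} K_μ^γ`. -/
def Kmu (m n : ℕ) (Ω : Emn m n → ℝ) (Ψ : SchwartzMap (Emn m n) ℂ) (μ : ℤ)
    (y : Emn m n) : ℂ :=
  ∑' γ : ℤ, Kmg m n Ω Ψ μ γ y

/-- The operator `T_{K_μ^γ}`. -/
def TKmg (m n : ℕ) (Ω : Emn m n → ℝ) (Ψ : SchwartzMap (Emn m n) ℂ) (μ γ : ℤ)
    (f : Fin m → Rn n → ℝ) (x : Rn n) : ℂ :=
  ∫ y : Emn m n, Kmg m n Ω Ψ μ γ y * ∏ j, (f j (x - projE y j) : ℂ)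

/-- The operator `T_{K_μ}`. -/
def TKmu (m n : ℕ) (Ω : Emn m n → ℝ) (Ψ : SchwartzMap (Emn m n) ℂ) (μ : ℤ)
    (f : Fin m → Rn n → ℝ) (x : Rn n) : ℂ :=
  ∫ y : Emn m n, Kmu m n Ω Ψ μ y * ∏ j, (f j (x - projE y j) : ℂ)

/-- The low-frequency kernel `𝒦 := ∑_{μ ≤ 0} K_μ`. -/
def Kcal (m n : ℕ) (Ω : Emn m n → ℝ) (Ψ : SchwartzMap (Emn m n) ℂ) (y : Emn m n) : ℂ :=
  ∑' μ : ℤ, if μ ≤ 0 then Kmu m n Ω Ψ μ y else 0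

/-- The operator `T_𝒦`. -/
def TKcal (m n : ℕ) (Ω : Emn m n → ℝ) (Ψ : SchwartzMap (Emn m n) ℂ)
    (f : Fin m → Rn n → ℝ) (x : Rn n) : ℂ :=
  ∫ y : Emn m n, Kcal m n Ω Ψ y * ∏ j, (f j (x - projE y j) : ℂ)

/-- Truncation of `g` to `Q*` (for `lam = false`) or to `(Q*)ᶜ` (for `lam = true`). -/
def trunc {n : ℕ} (Qs : Set (Rn n)) (lam : Bool) (g : Rn n → ℝ) : Rn n → ℝ :=
  fun u => if lam then Qsᶜ.indicator g u else Qs.indicator g u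



section AuxLemmas

lemma volume_cubeQ {n : ℕ} (c : Rn n) (t : ℝ) :
    volume (cubeQ c t) = ENNReal.ofReal t ^ n := by
  have hset : cubeQ c t = (MeasurableEquiv.toLp 2 (Fin n → ℝ)).symm ⁻¹'
      (Set.univ.pi fun i => Set.Icc (c i - t / 2) (c i + t / 2)) := by
    ext y
    simp only [cubeQ, Set.mem_setOf_eq, Set.mem_preimage, Set.mem_pi, Set.mem_univ,
      Set.mem_Icc, forall_true_left, abs_sub_le_iff]
    have he : ∀ i, (MeasurableEquiv.toLp 2 (Fin n → ℝ)).symm y i = y i := fun _ => rfl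
    simp only [he]
    constructor <;> intro h i <;> obtain ⟨h1, h2⟩ := h i <;> constructor <;> linarith
  rw [hset, (EuclideanSpace.volume_preserving_symm_measurableEquiv_toLp (Fin n)).measure_preimage
    ((MeasurableSet.univ_pi fun i => measurableSet_Icc).nullMeasurableSet)]
  rw [volume_pi_pi]
  simp [Real.volume_Icc, show ∀ i : Fin n, c i + t / 2 - (c i - t / 2) = t from fun i => by ring]


lemma volume_cubeQ_ne_zero {n : ℕ} (c : Rn n) {t : ℝ} (ht : 0 < t) :
    volume (cubeQ c t) ≠ 0 := by
  rw [volume_cubeQ]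
  exact pow_ne_zero _ (by simp [ENNReal.ofReal_eq_zero]; linarith)

lemma volume_cubeQ_ne_top {n : ℕ} (c : Rn n) (t : ℝ) :
    volume (cubeQ c t) ≠ ⊤ := by
  rw [volume_cubeQ]
  exact ENNReal.pow_ne_top ENNReal.ofReal_ne_top

lemma avgE_rpow_le {n : ℕ} (c : Rn n) {t : ℝ} (ht : 0 < t) (f : Rn n → ℝ≥0∞)
    (hf : AEMeasurable f (volume.restrict (cubeQ c t))) {δ : ℝ} (hδ0 : 0 ≤ δ) (hδ1 : δ ≤ 1) :
    avgE (cubeQ c t) (fun x => f x ^ δ) ≤ (avgE (cubeQ c t) f) ^ δ := by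
  have hQ0 : volume (cubeQ c t) ≠ 0 := volume_cubeQ_ne_zero c ht
  have hQt : volume (cubeQ c t) ≠ ⊤ := volume_cubeQ_ne_top c t
  rcases eq_or_lt_of_le hδ0 with h0 | h0
  · rw [← h0]
    simp only [ENNReal.rpow_zero, avgE]
    rw [setLIntegral_const, one_mul, ENNReal.inv_mul_cancel hQ0 hQt]
  rcases eq_or_lt_of_le hδ1 with h1 | h1
  · subst h1; simp
  have hδ : δ ≠ 0 := ne_of_gt h0
  have hpq : (1 / δ).HolderConjugate (1 / (1 - δ)) := by
    rw [Real.holderConjugate_iff]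
    constructor
    · rw [lt_div_iff₀ h0]; linarith
    · simp only [one_div, inv_inv]; ring
  have hfd : AEMeasurable (fun x => f x ^ δ) (volume.restrict (cubeQ c t)) :=
    hf.pow aemeasurable_const
  have H := ENNReal.lintegral_mul_le_Lp_mul_Lq (volume.restrict (cubeQ c t)) hpq
    (f := fun x => f x ^ δ) (g := fun _ => (1 : ℝ≥0∞)) hfd aemeasurable_const
  simp only [Pi.mul_apply, mul_one, ENNReal.one_rpow, lintegral_const,
    Measure.restrict_apply_univ, one_div_one_div, one_mul] at H
  have Hrw : ∀ x, (f x ^ δ) ^ (1 / δ) = f x := by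
    intro x
    rw [← ENNReal.rpow_mul, mul_one_div_cancel hδ, ENNReal.rpow_one]
  simp only [Hrw, one_div_one_div] at H
  -- H : ∫⁻ f^δ ≤ (∫⁻ f) ^ δ * (volume Q) ^ (1-δ)  (up to exponent shapes)
  have hvol : (volume (cubeQ c t))⁻¹ * (volume (cubeQ c t)) ^ (1 - δ)
      = ((volume (cubeQ c t))⁻¹) ^ δ := by
    rw [ENNReal.inv_rpow, ← ENNReal.rpow_neg, ← ENNReal.rpow_neg_one (volume (cubeQ c t)),
      ← ENNReal.rpow_add _ _ hQ0 hQt]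
    congr 1; ring
  calc avgE (cubeQ c t) (fun x => f x ^ δ)
      = (volume (cubeQ c t))⁻¹ * ∫⁻ x in cubeQ c t, f x ^ δ := rfl
    _ ≤ (volume (cubeQ c t))⁻¹ * ((∫⁻ x in cubeQ c t, f x) ^ δ
          * (volume (cubeQ c t)) ^ (1 - δ)) := by
        refine mul_le_mul_right ?_ _
        convert H using 3
    _ = ((volume (cubeQ c t))⁻¹) ^ δ * (∫⁻ x in cubeQ c t, f x) ^ δ := by
        rw [mul_comm ((∫⁻ x in cubeQ c t, f x) ^ δ), ← mul_assoc, hvol]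
    _ = (avgE (cubeQ c t) f) ^ δ := (ENNReal.mul_rpow_of_nonneg _ _ hδ0).symm


lemma essInf_rpow_le {n : ℕ} (ν : MeasureTheory.Measure (Rn n)) (g : Rn n → ℝ≥0∞)
    {δ : ℝ} (hδ0 : 0 ≤ δ) :
    (essInf g ν) ^ δ ≤ essInf (fun x => g x ^ δ) ν := by
  refine le_essInf_of_ae_le _ ?_
  filter_upwards [ae_essInf_le (f := g) (μ := ν)] with x hx
  exact ENNReal.rpow_le_rpow hx hδ0

lemma apFactor_rpow_le {n : ℕ} {pj : ℝ} (hpj : 1 ≤ pj) {wj : Rn n → ℝ} (hwj : ∀ x, 0 ≤ wj x)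
    (hm : AEMeasurable wj volume) (c : Rn n) {t : ℝ} (ht : 0 < t)
    {δ : ℝ} (hδ0 : 0 ≤ δ) (hδ1 : δ ≤ 1) :
    apFactor pj (fun x => wj x ^ δ) (cubeQ c t) ≤ (apFactor pj wj (cubeQ c t)) ^ δ := by
  have hpt : ∀ x, ENNReal.ofReal (wj x ^ δ) = ENNReal.ofReal (wj x) ^ δ :=
    fun x => (ENNReal.ofReal_rpow_of_nonneg (hwj x) hδ0).symm
  unfold apFactor
  split_ifs with h
  · rw [ENNReal.inv_rpow]
    refine ENNReal.inv_le_inv.mpr ?_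
    simp only [hpt]
    exact essInf_rpow_le _ _ hδ0
  · have key : (fun x : Rn n => ENNReal.ofReal (wj x ^ δ) ^ (-(pj - 1)⁻¹))
        = fun x => (ENNReal.ofReal (wj x) ^ (-(pj - 1)⁻¹)) ^ δ := by
      funext x
      rw [hpt x, ← ENNReal.rpow_mul, ← ENNReal.rpow_mul, mul_comm]
    rw [key]
    have hG : AEMeasurable (fun x => ENNReal.ofReal (wj x) ^ (-(pj - 1)⁻¹))
        (volume.restrict (cubeQ c t)) :=
      ((hm.ennreal_ofReal).pow aemeasurable_const).restrict
    have h1 := avgE_rpow_le c ht _ hG hδ0 hδ1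
    calc (avgE (cubeQ c t) fun x => (ENNReal.ofReal (wj x) ^ (-(pj - 1)⁻¹)) ^ δ)
          ^ ((pj - 1) / pj)
        ≤ ((avgE (cubeQ c t) fun x => ENNReal.ofReal (wj x) ^ (-(pj - 1)⁻¹)) ^ δ)
          ^ ((pj - 1) / pj) := by
          exact ENNReal.rpow_le_rpow h1 (div_nonneg (by linarith) (by linarith))
      _ = ((avgE (cubeQ c t) fun x => ENNReal.ofReal (wj x) ^ (-(pj - 1)⁻¹))
          ^ ((pj - 1) / pj)) ^ δ := by
          rw [← ENNReal.rpow_mul, ← ENNReal.rpow_mul, mul_comm]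

lemma vweight_rpow {m n : ℕ} (pv : Fin m → ℝ) {w : Fin m → Rn n → ℝ}
    (hw : ∀ j x, 0 ≤ w j x) (δ : ℝ) (x : Rn n) :
    vweight pv (fun j x => w j x ^ δ) x = (vweight pv w x) ^ δ := by
  unfold vweight
  rw [← Real.finset_prod_rpow _ _ (fun j _ => Real.rpow_nonneg (hw j x) _)]
  refine Finset.prod_congr rfl fun j _ => ?_
  rw [← Real.rpow_mul (hw j x), mul_comm, Real.rpow_mul (hw j x)]

end AuxLemmas

/-- Lemma 2.4: multiple weights raised to a power `0 ≤ δ ≤ 1`. -/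
theorem memApVec_rpow_of_le_one
    (m n : ℕ) (pv : Fin m → ℝ) (hpv : ∀ j, 1 ≤ pv j)
    (w : Fin m → Rn n → ℝ) (hw : ∀ j, IsWeight (w j)) (hA : MemApVec pv w)
    (δ : ℝ) (hδ0 : 0 ≤ δ) (hδ1 : δ ≤ 1) :
    MemApVec pv (fun j x => w j x ^ δ) := by
  obtain ⟨C, hCt, hC⟩ := hA
  refine ⟨max 1 C, (max_lt (by simp) hCt.lt_top).ne, fun c t ht => ?_⟩
  have hwm : ∀ j, AEMeasurable (w j) volume :=
    fun j => (hw j).2.aestronglyMeasurable.aemeasurable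
  have hwnn : ∀ j x, 0 ≤ w j x := fun j => (hw j).1
  have hvnn : ∀ x, 0 ≤ vweight pv w x :=
    fun x => Finset.prod_nonneg fun j _ => Real.rpow_nonneg (hwnn j x) _
  have hv : (fun x => ENNReal.ofReal (vweight pv (fun j x => w j x ^ δ) x))
      = fun x => ENNReal.ofReal (vweight pv w x) ^ δ := by
    funext x
    rw [vweight_rpow pv hwnn δ x, ENNReal.ofReal_rpow_of_nonneg (hvnn x) hδ0]
  have hvmeas : AEMeasurable (fun x => ENNReal.ofReal (vweight pv w x))
      (volume.restrict (cubeQ c t)) := by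
    refine AEMeasurable.restrict ?_
    exact (Finset.aemeasurable_fun_prod _ fun j _ => (hwm j).pow aemeasurable_const).ennreal_ofReal
  have hs0 : 0 ≤ ∑ j, (pv j)⁻¹ :=
    Finset.sum_nonneg fun j _ => inv_nonneg.mpr (by linarith [hpv j])
  calc (avgE (cubeQ c t)
        fun x => ENNReal.ofReal (vweight pv (fun j x => w j x ^ δ) x)) ^ (∑ j, (pv j)⁻¹) *
        ∏ j, apFactor (pv j) (fun x => w j x ^ δ) (cubeQ c t)
      ≤ (((avgE (cubeQ c t) fun x => ENNReal.ofReal (vweight pv w x)) ^ (∑ j, (pv j)⁻¹)) ^ δ) *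
        ∏ j, (apFactor (pv j) (w j) (cubeQ c t)) ^ δ := by
        refine mul_le_mul' ?_ (Finset.prod_le_prod' fun j _ =>
          apFactor_rpow_le (hpv j) (hwnn j) (hwm j) c ht hδ0 hδ1)
        rw [hv, ← ENNReal.rpow_mul, mul_comm, ENNReal.rpow_mul]
        exact ENNReal.rpow_le_rpow (avgE_rpow_le c ht _ hvmeas hδ0 hδ1) hs0
    _ = (((avgE (cubeQ c t) fun x => ENNReal.ofReal (vweight pv w x)) ^ (∑ j, (pv j)⁻¹)) *
        ∏ j, apFactor (pv j) (w j) (cubeQ c t)) ^ δ := by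
        rw [ENNReal.prod_rpow_of_nonneg hδ0, ENNReal.mul_rpow_of_nonneg _ _ hδ0]
    _ ≤ C ^ δ := ENNReal.rpow_le_rpow (hC c t ht) hδ0
    _ ≤ (max 1 C) ^ δ := ENNReal.rpow_le_rpow (le_max_right 1 C) hδ0
    _ ≤ (max 1 C) ^ (1 : ℝ) := ENNReal.rpow_le_rpow_of_exponent_le (le_max_left 1 C) hδ1
    _ = max 1 C := ENNReal.rpow_one _

end RoughMSI
end
end

section
/- Let m ≥ 1 be an integer, 1 < p < ∞, r > 1, and let w be a weight on ℝⁿ such that w^{1−p′} ∈ A_{mp′}(ℝⁿ), where p′ = p/(p−1). Then w^{1−(rp)′} ∈ A_{m(rp)′}(ℝⁿ) and the constants satisfy [w^{1−(rp)′}]_{A_{m(rp)′}} ≤ ([w^{1−p′}]_{A_{mp′}})^{(p−1)/(rp−1)}. -/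
open MeasureTheory ENNReal Filter
open scoped FourierTransform

noncomputable section

namespace RoughMSI

lemma avgE_rpow_le_s5 {n : ℕ} {Q : Set (Rn n)} (hQ0 : volume Q ≠ 0) (hQt : volume Q ≠ ⊤)
    {g : Rn n → ℝ≥0∞} (hg : AEMeasurable g (volume.restrict Q)) {c : ℝ}
    (hc0 : 0 < c) (hc1 : c ≤ 1) :
    avgE Q (fun x => g x ^ c) ≤ (avgE Q g) ^ c := by
  rcases eq_or_lt_of_le hc1 with rfl | hc1
  · simp [avgE]
  · have hpq : Real.HolderConjugate (1/c) (1/(1-c)) := by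
      rw [Real.holderConjugate_iff]; constructor
      · rw [lt_div_iff₀ hc0]; linarith
      · field_simp; ring
    have H := ENNReal.lintegral_mul_le_Lp_mul_Lq (volume.restrict Q) hpq
      (f := fun x => g x ^ c) (g := fun _ => (1 : ℝ≥0∞)) (hg.pow aemeasurable_const)
      aemeasurable_const
    simp only [Pi.mul_apply, mul_one, ENNReal.one_rpow, lintegral_one, Measure.restrict_apply,
      MeasurableSet.univ, Set.univ_inter, one_div_one_div] at H
    have hgc : ∀ x, (g x ^ c) ^ (1/c) = g x := by
      intro x
      rw [← ENNReal.rpow_mul, mul_one_div, div_self hc0.ne', ENNReal.rpow_one]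
    simp only [hgc, one_div_one_div] at H
    calc avgE Q (fun x => g x ^ c) = (volume Q)⁻¹ * ∫⁻ x in Q, g x ^ c := rfl
      _ ≤ (volume Q)⁻¹ * ((∫⁻ x in Q, g x) ^ c * volume Q ^ (1-c)) := by
          gcongr
      _ = (avgE Q g) ^ c := by
          rw [avgE, ENNReal.mul_rpow_of_nonneg _ _ hc0.le]
          rw [← ENNReal.rpow_neg_one (volume Q), ← ENNReal.rpow_mul,
            ← mul_assoc, mul_comm ((volume Q) ^ (-1:ℝ)), mul_assoc,
            ← ENNReal.rpow_add _ _ hQ0 hQt]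
          ring_nf

/-- the key Muckenhoupt-class computation in the proof of Lemma 2.6. -/
theorem muckenhoupt_conjugate_scaling
    (m n : ℕ) (hm : 1 ≤ m) (p : ℝ) (hp : 1 < p) (r : ℝ) (hr : 1 < r)
    (w : Rn n → ℝ) (hw : IsWeight w)
    (hA : apConst ((m : ℝ) * (p / (p - 1))) (fun x => w x ^ (1 - p / (p - 1))) ≠ ⊤) :
    apConst ((m : ℝ) * (r * p / (r * p - 1)))
        (fun x => w x ^ (1 - r * p / (r * p - 1))) ≠ ⊤ ∧
      apConst ((m : ℝ) * (r * p / (r * p - 1)))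
          (fun x => w x ^ (1 - r * p / (r * p - 1))) ≤
        (apConst ((m : ℝ) * (p / (p - 1))) (fun x => w x ^ (1 - p / (p - 1)))) ^
          ((p - 1) / (r * p - 1)) := by
  have hm1 : (1:ℝ) ≤ (m:ℝ) := by exact_mod_cast hm
  have hp0 : 0 < p := by linarith
  have hp1 : 0 < p - 1 := by linarith
  have hrp : 1 < r * p := by nlinarith
  have hrp1 : 0 < r * p - 1 := by linarith
  have hpr : p ≤ r * p := by nlinarith
  set θ : ℝ := (p - 1) / (r * p - 1) with hθ
  have hθ0 : 0 < θ := div_pos hp1 hrp1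
  have hθ1 : θ ≤ 1 := (div_le_one hrp1).mpr (by linarith)
  have hb : 0 < ((m:ℝ) - 1) * p + 1 := by nlinarith
  have ha : 0 < ((m:ℝ) - 1) * (r * p) + 1 := by nlinarith
  set cc : ℝ := (((m:ℝ) - 1) * p + 1) / (((m:ℝ) - 1) * (r * p) + 1) with hccdef
  have hcc0 : 0 < cc := div_pos hb ha
  have hcc1 : cc ≤ 1 := (div_le_one ha).mpr (by nlinarith)
  have hs : (m:ℝ) * (p / (p - 1)) - 1 = (((m:ℝ) - 1) * p + 1) / (p - 1) := by
    field_simp; ring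
  have hs' : (m:ℝ) * (r * p / (r * p - 1)) - 1 = (((m:ℝ) - 1) * (r * p) + 1) / (r * p - 1) := by
    field_simp; ring
  have hs1 : 0 < (m:ℝ) * (p / (p - 1)) - 1 := hs ▸ div_pos hb hp1
  have hs'1 : 0 < (m:ℝ) * (r * p / (r * p - 1)) - 1 := hs' ▸ div_pos ha hrp1
  -- pointwise identities
  have hpw1 : ∀ x, ENNReal.ofReal (w x ^ (1 - r * p / (r * p - 1)))
      = ENNReal.ofReal (w x ^ (1 - p / (p - 1))) ^ θ := by
    intro x
    have h1 : (1 - r * p / (r * p - 1)) = (1 - p / (p - 1)) * θ := by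
      rw [hθ]; field_simp; ring
    rw [h1, Real.rpow_mul (hw.1 x),
      ENNReal.ofReal_rpow_of_nonneg (Real.rpow_nonneg (hw.1 x) _) hθ0.le]
  have hpw2 : ∀ x, ENNReal.ofReal (w x ^ (1 - r * p / (r * p - 1)))
        ^ (-((m:ℝ) * (r * p / (r * p - 1)) - 1)⁻¹)
      = (ENNReal.ofReal (w x ^ (1 - p / (p - 1)))
        ^ (-((m:ℝ) * (p / (p - 1)) - 1)⁻¹)) ^ cc := by
    intro x
    rcases (hw.1 x).eq_or_lt with h | h
    · have hneg1 : 1 - r * p / (r * p - 1) < 0 := by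
        rw [sub_neg, lt_div_iff₀ hrp1]; linarith
      have hneg2 : 1 - p / (p - 1) < 0 := by
        rw [sub_neg, lt_div_iff₀ hp1]; linarith
      rw [← h, Real.zero_rpow hneg1.ne, Real.zero_rpow hneg2.ne, ENNReal.ofReal_zero,
        ENNReal.zero_rpow_of_neg (by simpa using hs'1),
        ENNReal.zero_rpow_of_neg (by simpa using hs1),
        ENNReal.top_rpow_of_pos hcc0]
    · rw [← ENNReal.ofReal_rpow_of_pos h, ← ENNReal.ofReal_rpow_of_pos h,
        ← ENNReal.rpow_mul, ← ENNReal.rpow_mul, ← ENNReal.rpow_mul]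
      congr 1
      rw [hs, hs', inv_div, inv_div, hccdef]
      have : r * p * ((m:ℝ) - 1) + 1 ≠ 0 := by nlinarith
      have : p * ((m:ℝ) - 1) + 1 ≠ 0 := by nlinarith
      field_simp
      ring
  have hE : cc * ((m:ℝ) * (r * p / (r * p - 1)) - 1) = ((m:ℝ) * (p / (p - 1)) - 1) * θ := by
    rw [hs, hs', hccdef, hθ]
    have : ((m:ℝ) - 1) * p * r + 1 ≠ 0 := by nlinarith
    field_simp
  -- the per-cube bound
  have key : ∀ (cQ : Rn n) (t : ℝ), 0 < t →
      avgE (cubeQ cQ t) (fun x => ENNReal.ofReal (w x ^ (1 - r * p / (r * p - 1)))) *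
        (avgE (cubeQ cQ t) (fun x => ENNReal.ofReal (w x ^ (1 - r * p / (r * p - 1)))
            ^ (-((m:ℝ) * (r * p / (r * p - 1)) - 1)⁻¹))) ^ ((m:ℝ) * (r * p / (r * p - 1)) - 1)
      ≤ (apConst ((m:ℝ) * (p / (p - 1))) (fun x => w x ^ (1 - p / (p - 1)))) ^ θ := by
    intro cQ t ht
    set Q : Set (Rn n) := cubeQ cQ t with hQdef
    have hQ0 : volume Q ≠ 0 := by
      rw [hQdef, volume_cubeQ]
      exact pow_ne_zero _ (by simp [ENNReal.ofReal_eq_zero]; linarith)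
    have hQt : volume Q ≠ ⊤ := by
      rw [hQdef, volume_cubeQ]
      exact ENNReal.pow_ne_top ENNReal.ofReal_ne_top
    have hwa : AEMeasurable w (volume.restrict Q) :=
      hw.2.aestronglyMeasurable.aemeasurable.restrict
    have hg1 : AEMeasurable (fun x => ENNReal.ofReal (w x ^ (1 - p / (p - 1))))
        (volume.restrict Q) :=
      ENNReal.measurable_ofReal.comp_aemeasurable (hwa.pow aemeasurable_const)
    have hg2 : AEMeasurable (fun x => ENNReal.ofReal (w x ^ (1 - p / (p - 1)))
        ^ (-((m:ℝ) * (p / (p - 1)) - 1)⁻¹)) (volume.restrict Q) :=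
      hg1.pow aemeasurable_const
    have step1 : avgE Q (fun x => ENNReal.ofReal (w x ^ (1 - r * p / (r * p - 1))))
        ≤ (avgE Q (fun x => ENNReal.ofReal (w x ^ (1 - p / (p - 1))))) ^ θ := by
      calc avgE Q (fun x => ENNReal.ofReal (w x ^ (1 - r * p / (r * p - 1))))
          = avgE Q (fun x => ENNReal.ofReal (w x ^ (1 - p / (p - 1))) ^ θ) := by
            simp only [hpw1]
        _ ≤ _ := avgE_rpow_le_s5 hQ0 hQt hg1 hθ0 hθ1
    have step2 : avgE Q (fun x => ENNReal.ofReal (w x ^ (1 - r * p / (r * p - 1)))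
          ^ (-((m:ℝ) * (r * p / (r * p - 1)) - 1)⁻¹))
        ≤ (avgE Q (fun x => ENNReal.ofReal (w x ^ (1 - p / (p - 1)))
          ^ (-((m:ℝ) * (p / (p - 1)) - 1)⁻¹))) ^ cc := by
      calc avgE Q (fun x => ENNReal.ofReal (w x ^ (1 - r * p / (r * p - 1)))
            ^ (-((m:ℝ) * (r * p / (r * p - 1)) - 1)⁻¹))
          = avgE Q (fun x => (ENNReal.ofReal (w x ^ (1 - p / (p - 1)))
            ^ (-((m:ℝ) * (p / (p - 1)) - 1)⁻¹)) ^ cc) := by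
            simp only [hpw2]
        _ ≤ _ := avgE_rpow_le_s5 hQ0 hQt hg2 hcc0 hcc1
    have step2' : (avgE Q (fun x => ENNReal.ofReal (w x ^ (1 - r * p / (r * p - 1)))
          ^ (-((m:ℝ) * (r * p / (r * p - 1)) - 1)⁻¹))) ^ ((m:ℝ) * (r * p / (r * p - 1)) - 1)
        ≤ ((avgE Q (fun x => ENNReal.ofReal (w x ^ (1 - p / (p - 1)))
          ^ (-((m:ℝ) * (p / (p - 1)) - 1)⁻¹))) ^ ((m:ℝ) * (p / (p - 1)) - 1)) ^ θ := by
      calc _ ≤ ((avgE Q (fun x => ENNReal.ofReal (w x ^ (1 - p / (p - 1)))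
            ^ (-((m:ℝ) * (p / (p - 1)) - 1)⁻¹))) ^ cc) ^ ((m:ℝ) * (r * p / (r * p - 1)) - 1) :=
            ENNReal.rpow_le_rpow step2 hs'1.le
        _ = _ := by
            rw [← ENNReal.rpow_mul, hE, ENNReal.rpow_mul]
    calc avgE Q (fun x => ENNReal.ofReal (w x ^ (1 - r * p / (r * p - 1)))) *
          (avgE Q (fun x => ENNReal.ofReal (w x ^ (1 - r * p / (r * p - 1)))
            ^ (-((m:ℝ) * (r * p / (r * p - 1)) - 1)⁻¹))) ^ ((m:ℝ) * (r * p / (r * p - 1)) - 1)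
        ≤ (avgE Q (fun x => ENNReal.ofReal (w x ^ (1 - p / (p - 1))))) ^ θ *
          ((avgE Q (fun x => ENNReal.ofReal (w x ^ (1 - p / (p - 1)))
            ^ (-((m:ℝ) * (p / (p - 1)) - 1)⁻¹))) ^ ((m:ℝ) * (p / (p - 1)) - 1)) ^ θ :=
          mul_le_mul' step1 step2'
      _ = (avgE Q (fun x => ENNReal.ofReal (w x ^ (1 - p / (p - 1)))) *
          (avgE Q (fun x => ENNReal.ofReal (w x ^ (1 - p / (p - 1)))
            ^ (-((m:ℝ) * (p / (p - 1)) - 1)⁻¹))) ^ ((m:ℝ) * (p / (p - 1)) - 1)) ^ θ := by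
          rw [ENNReal.mul_rpow_of_nonneg _ _ hθ0.le]
      _ ≤ (apConst ((m:ℝ) * (p / (p - 1))) (fun x => w x ^ (1 - p / (p - 1)))) ^ θ := by
          refine ENNReal.rpow_le_rpow ?_ hθ0.le
          exact le_iSup_of_le cQ (le_iSup_of_le t (le_iSup_of_le ht le_rfl))
  have main_le : apConst ((m : ℝ) * (r * p / (r * p - 1)))
      (fun x => w x ^ (1 - r * p / (r * p - 1)))
      ≤ (apConst ((m : ℝ) * (p / (p - 1))) (fun x => w x ^ (1 - p / (p - 1)))) ^ θ := by
    refine iSup_le fun cQ => iSup_le fun t => iSup_le fun ht => key cQ t ht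
  exact ⟨ne_top_of_le_ne_top (ENNReal.rpow_ne_top_of_nonneg hθ0.le hA) main_le, main_le⟩

end RoughMSI
end
end
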